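/- arXiv:1709.05203 — 5 statements merged into one kernel-verified Lean document; each statement's English description precedes it below -/
import Mathlib

section
/- Let Σ be a signature and R a rewrite system that is confluent and terminating modulo a set of equations B, and strictly B-coherent. Then for all terms u, v: u and v are provably equal from R (as equations) together with B if and only if the R,B-normal forms of u and v are B-equal. -/
/-- Church-Rosser Theorem for a decomposition (Σ, B, R): if the one-step
    rewrite relation `Step` (rewriting with R modulo B) is terminating,
    confluent modulo B, and strictly B-coherent, and `nf` computes normal
    forms, then two terms are provably equal from R (read as equations)
    together with B iff their normal forms are B-equal. -/
theorem church_rosser_modulo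
    {T : Type} (Step B : T → T → Prop) (nf : T → T)
    (hB : Equivalence B)
    (hterm : WellFounded (fun a b => Step b a))
    (hcoh : ∀ u u' v, Step u v → B u u' → ∃ v', Step u' v' ∧ B v v')
    (hconf : ∀ u v₁ v₂, Relation.ReflTransGen Step u v₁ →
      Relation.ReflTransGen Step u v₂ →
      ∃ w₁ w₂, Relation.ReflTransGen Step v₁ w₁ ∧
        Relation.ReflTransGen Step v₂ w₂ ∧ B w₁ w₂)
    (hnf₁ : ∀ t, Relation.ReflTransGen Step t (nf t))
    (hnf₂ : ∀ t u, ¬ Step (nf t) u) :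
    ∀ u v, Relation.EqvGen (fun a b => Step a b ∨ B a b) u v ↔ B (nf u) (nf v) := by
  -- normal forms don't rewrite further
  have hstop : ∀ t w, Relation.ReflTransGen Step (nf t) w → w = nf t := by
    intro t w h
    rcases Relation.ReflTransGen.cases_head h with rfl | ⟨x, hx, _⟩
    · rfl
    · exact absurd hx (hnf₂ t x)
  -- coherence extended to many steps
  have hcoh' : ∀ u u' w, Relation.ReflTransGen Step u w → B u u' →
      ∃ w', Relation.ReflTransGen Step u' w' ∧ B w w' := by
    intro u u' w h hb
    induction h with
    | refl => exact ⟨u', Relation.ReflTransGen.refl, hb⟩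
    | tail hsteps hstep ih =>
      rcases ih with ⟨w', hw', hbw⟩
      rcases hcoh _ w' _ hstep hbw with ⟨x', hx', hbx⟩
      exact ⟨x', hw'.tail hx', hbx⟩
  -- one step preserves B-equality of normal forms
  have hstep_nf : ∀ u v, Step u v → B (nf u) (nf v) := by
    intro u v h
    rcases hconf u (nf u) (nf v) (hnf₁ u)
      ((Relation.ReflTransGen.single h).trans (hnf₁ v)) with ⟨w₁, w₂, h1, h2, hb⟩
    rw [hstop u w₁ h1, hstop v w₂ h2] at hb
    exact hb
  -- B preserves B-equality of normal forms
  have hB_nf : ∀ u v, B u v → B (nf u) (nf v) := by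
    intro u v h
    rcases hcoh' u v (nf u) (hnf₁ u) h with ⟨v', hv', hb⟩
    -- v' is a normal form since B (nf u) v'
    have hv'nf : ∀ x, ¬ Step v' x := by
      intro x hx
      rcases hcoh v' (nf u) x hx (hB.symm hb) with ⟨y, hy, _⟩
      exact hnf₂ u y hy
    rcases hconf v v' (nf v) hv' (hnf₁ v) with ⟨w₁, w₂, h1, h2, hb'⟩
    have : w₁ = v' := by
      rcases Relation.ReflTransGen.cases_head h1 with rfl | ⟨x, hx, _⟩
      · rfl
      · exact absurd hx (hv'nf x)
    rw [this, hstop v w₂ h2] at hb'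
    exact hB.trans hb hb'
  intro u v
  constructor
  · intro h
    induction h with
    | rel a b hab =>
      rcases hab with hs | hb
      · exact hstep_nf a b hs
      · exact hB_nf a b hb
    | refl a => exact hB.refl _
    | symm a b _ ih => exact hB.symm ih
    | trans a b c _ _ ih1 ih2 => exact hB.trans ih1 ih2
  · intro h
    have toNf' : ∀ t w, Relation.ReflTransGen Step t w →
        Relation.EqvGen (fun a b => Step a b ∨ B a b) t w := by
      intro t w hw
      induction hw with
      | refl => exact Relation.EqvGen.refl _
      | tail _ hstep ih =>
        exact Relation.EqvGen.trans _ _ _ ih (Relation.EqvGen.rel _ _ (Or.inl hstep))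
    have toNf : ∀ t, Relation.EqvGen (fun a b => Step a b ∨ B a b) t (nf t) :=
      fun t => toNf' t (nf t) (hnf₁ t)
    exact Relation.EqvGen.trans _ _ _ (toNf u)
      (Relation.EqvGen.trans _ _ _ (Relation.EqvGen.rel _ _ (Or.inr h))
        (Relation.EqvGen.symm _ _ (toNf v)))
end

section
/- Let R = (Σ,B,R) be a convergent decomposition of (Σ,E) and X a set of variables. Then the canonical term algebra C_R(X), whose elements are B-equivalence classes of R,B-normal forms of terms with variables X, and which interprets each f by normalizing after application, is isomorphic to the free (Σ,E)-algebra T_{Σ/E}(X) via [t]_E ↦ [t!_{R,B}]_B. -/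
/-- Terms over a signature (Op, ar) with variables X. -/
inductive Tm (Op : Type) (ar : Op → ℕ) (X : Type) where
  | var : X → Tm Op ar X
  | op : (f : Op) → (Fin (ar f) → Tm Op ar X) → Tm Op ar X

/-- The canonical term algebra C_R(X) of a convergent decomposition
    R = (Σ, B, R) is isomorphic to T_{Σ/E}(X) via [t]_E ↦ [t!_{R,B}]_B.
    Concretely: provable E-equality (E = R as equations, plus B) coincides
    with B-equality of normal forms (well-definedness and injectivity of the
    map on quotients; surjectivity onto classes of normal forms is by
    construction), and the map is a homomorphism for the operations of
    C_R(X), which normalize after application. -/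
theorem canonical_term_algebra_iso
    {Op X : Type} {ar : Op → ℕ}
    (Step B : Tm Op ar X → Tm Op ar X → Prop) (nf : Tm Op ar X → Tm Op ar X)
    (hB : Equivalence B)
    (hBcong : ∀ (f : Op) (ts ts' : Fin (ar f) → Tm Op ar X),
      (∀ i, B (ts i) (ts' i)) → B (.op f ts) (.op f ts'))
    (hStepCtx : ∀ (f : Op) (ts : Fin (ar f) → Tm Op ar X) (i : Fin (ar f)) t',
      Step (ts i) t' → Step (.op f ts) (.op f (Function.update ts i t')))
    (hterm : WellFounded (fun a b => Step b a))
    (hcoh : ∀ u u' v, Step u v → B u u' → ∃ v', Step u' v' ∧ B v v')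
    (hconf : ∀ u v₁ v₂, Relation.ReflTransGen Step u v₁ →
      Relation.ReflTransGen Step u v₂ →
      ∃ w₁ w₂, Relation.ReflTransGen Step v₁ w₁ ∧
        Relation.ReflTransGen Step v₂ w₂ ∧ B w₁ w₂)
    (hnf₁ : ∀ t, Relation.ReflTransGen Step t (nf t))
    (hnf₂ : ∀ t u, ¬ Step (nf t) u) :
    (∀ t t', Relation.EqvGen (fun a b => Step a b ∨ B a b) t t' ↔ B (nf t) (nf t')) ∧
    (∀ (f : Op) (ts : Fin (ar f) → Tm Op ar X),
      B (nf (.op f ts)) (nf (.op f (fun i => nf (ts i))))) := by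
  have rtg_normal : ∀ n w, (∀ u, ¬ Step n u) → Relation.ReflTransGen Step n w → w = n := by
    intro n w hn h
    induction h with
    | refl => rfl
    | tail h₁ h₂ ih => exact absurd (ih ▸ h₂) (hn _)
  have normA : ∀ t u, Relation.ReflTransGen Step t u → B (nf t) (nf u) := by
    intro t u h
    obtain ⟨w₁, w₂, hw₁, hw₂, hw⟩ := hconf t (nf t) (nf u) (hnf₁ t) (h.trans (hnf₁ u))
    rw [rtg_normal _ _ (hnf₂ t) hw₁, rtg_normal _ _ (hnf₂ u) hw₂] at hw
    exact hw
  have cohtr : ∀ t u, Relation.ReflTransGen Step t u → ∀ t', B t t' →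
      ∃ v, Relation.ReflTransGen Step t' v ∧ B u v := by
    intro t u h
    induction h with
    | refl => exact fun t' hb => ⟨t', .refl, hb⟩
    | tail h₁ h₂ ih =>
      intro t' hb
      obtain ⟨v, hv, hbv⟩ := ih t' hb
      obtain ⟨v', hv', hbv'⟩ := hcoh _ v _ h₂ hbv
      exact ⟨v', hv.tail hv', hbv'⟩
  have normB : ∀ n v, (∀ u, ¬ Step n u) → B n v → ∀ u, ¬ Step v u := by
    intro n v hn hb u hs
    obtain ⟨x, hx, _⟩ := hcoh v n u hs (hB.symm hb)
    exact hn x hx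
  have normC : ∀ t t', B t t' → B (nf t) (nf t') := by
    intro t t' hb
    obtain ⟨v, hv, hbv⟩ := cohtr t (nf t) (hnf₁ t) t' hb
    have hvnf : ∀ u, ¬ Step v u := normB (nf t) v (hnf₂ t) hbv
    obtain ⟨w₁, w₂, hw₁, hw₂, hw⟩ := hconf t' v (nf t') hv (hnf₁ t')
    rw [rtg_normal v w₁ hvnf hw₁, rtg_normal _ _ (hnf₂ t') hw₂] at hw
    exact hB.trans hbv hw
  have rtgE : ∀ t u, Relation.ReflTransGen Step t u →
      Relation.EqvGen (fun a b => Step a b ∨ B a b) t u := by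
    intro t u h
    induction h with
    | refl => exact .refl t
    | tail _ h₂ ih => exact .trans _ _ _ ih (.rel _ _ (Or.inl h₂))
  constructor
  · intro t t'
    constructor
    · intro h
      induction h with
      | rel a b hab =>
        rcases hab with h | h
        · exact normA a b (.single h)
        · exact normC a b h
      | refl a => exact hB.refl _
      | symm _ _ _ ih => exact hB.symm ih
      | trans _ _ _ _ _ ih₁ ih₂ => exact hB.trans ih₁ ih₂
    · intro h
      exact .trans _ _ _ (rtgE t (nf t) (hnf₁ t))
        (.trans _ _ _ (.rel _ _ (Or.inr h)) (.symm _ _ (rtgE t' (nf t') (hnf₁ t'))))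
  · intro f ts
    have upd : ∀ (ss : Fin (ar f) → Tm Op ar X) (i : Fin (ar f)) u,
        Relation.ReflTransGen Step (ss i) u →
        Relation.ReflTransGen Step (.op f ss) (.op f (Function.update ss i u)) := by
      intro ss i u h
      induction h with
      | refl => rw [Function.update_eq_self]
      | tail h₁ h₂ ih =>
        refine ih.tail ?_
        have := hStepCtx f (Function.update ss i _) i _
          (by rw [Function.update_self]; exact h₂)
        rwa [Function.update_idem] at this
    have all : ∀ (S : Finset (Fin (ar f))),
        Relation.ReflTransGen Step (.op f ts)
          (.op f (fun i => if i ∈ S then nf (ts i) else ts i)) := by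
      intro S
      induction S using Finset.induction_on with
      | empty => simpa using Relation.ReflTransGen.refl
      | @insert a S ha ih =>
        have heq : (fun i => if i ∈ insert a S then nf (ts i) else ts i) =
            Function.update (fun i => if i ∈ S then nf (ts i) else ts i) a (nf (ts a)) := by
          funext i
          by_cases h : i = a
          · subst h; simp
          · simp [Function.update_of_ne h, h, Finset.mem_insert]
        rw [heq]
        exact ih.trans (upd _ a _ (by simpa [ha] using hnf₁ (ts a)))
    have h := all Finset.univ
    simp only [Finset.mem_univ, if_true] at h
    exact normA _ _ h
end

section
/- In the initial algebra of natural numbers with 0, 1 and associative-commutative addition with identity 0, and the strict order predicate defined by the single rule N + M + 1 > N → tt with negative pattern N > N + M ≠ tt, the trichotomy law holds: for all naturals n, m, exactly the disjunction (n > m) ∨ (m > n) ∨ (n = m) is valid; consequently, the conjunction n > m ≠ tt ∧ m > n ≠ tt ∧ n ≠ m is unsatisfiable even though each disequality is individually consistent. -/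
/-- Trichotomy for the strict order predicate `n > m ⇔ ∃ k, n = m + k + 1`:
    the disjunction is valid, the conjunction of the three disequalities is
    unsatisfiable, yet each disequality is individually consistent. -/
theorem nat_gt_trichotomy_not_os_compact :
    (∀ n m : ℕ, (∃ k, n = m + k + 1) ∨ (∃ k, m = n + k + 1) ∨ n = m) ∧
    (¬ ∃ n m : ℕ, ¬ (∃ k, n = m + k + 1) ∧ ¬ (∃ k, m = n + k + 1) ∧ n ≠ m) ∧
    (∃ n m : ℕ, ¬ (∃ k, n = m + k + 1)) ∧
    (∃ n m : ℕ, ¬ (∃ k, m = n + k + 1)) ∧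
    (∃ n m : ℕ, n ≠ m) := by
  have tri : ∀ n m : ℕ, (∃ k, n = m + k + 1) ∨ (∃ k, m = n + k + 1) ∨ n = m := by
    intro n m
    rcases lt_trichotomy n m with h | h | h
    · exact Or.inr (Or.inl ⟨m - n - 1, by omega⟩)
    · exact Or.inr (Or.inr h)
    · exact Or.inl ⟨n - m - 1, by omega⟩
  refine ⟨tri, ?_, ⟨0, 0, by omega⟩, ⟨0, 0, by omega⟩, ⟨0, 1, by omega⟩⟩
  rintro ⟨n, m, h1, h2, h3⟩
  rcases tri n m with h | h | h <;> tauto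
end

section
/- Let Ω and Δ be disjoint signatures, B_Ω a set of regular and linear Ω-equations, and B_Δ a set of regular and linear equations whose both sides are non-variable Δ-terms (i.e., have a Δ-symbol at the root). Then B = B_Ω ∪ B_Δ is conservative over Ω-terms: if u is an Ω-term (possibly with variables), v is any Σ-term with Σ = Ω ⊎ Δ, and u =_B v, then v is also an Ω-term. -/
/-- Terms over a disjoint union of signatures Ω ⊎ Δ, with variables ℕ. -/
inductive STm (Ω Δ : Type) (arΩ : Ω → ℕ) (arΔ : Δ → ℕ) where
  | var : ℕ → STm Ω Δ arΩ arΔ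
  | opΩ : (f : Ω) → (Fin (arΩ f) → STm Ω Δ arΩ arΔ) → STm Ω Δ arΩ arΔ
  | opΔ : (g : Δ) → (Fin (arΔ g) → STm Ω Δ arΩ arΔ) → STm Ω Δ arΩ arΔ

namespace STm

variable {Ω Δ : Type} {arΩ : Ω → ℕ} {arΔ : Δ → ℕ}

def subst (σ : ℕ → STm Ω Δ arΩ arΔ) : STm Ω Δ arΩ arΔ → STm Ω Δ arΩ arΔ
  | .var x => σ x
  | .opΩ f ts => .opΩ f (fun i => (ts i).subst σ)
  | .opΔ g ts => .opΔ g (fun i => (ts i).subst σ)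

/-- t is an Ω-term: built only from Ω-symbols and variables. -/
def isOmega : STm Ω Δ arΩ arΔ → Prop
  | .var _ => True
  | .opΩ _ ts => ∀ i, (ts i).isOmega
  | .opΔ _ _ => False

/-- t has a Δ-symbol at the root (a non-variable Δ-term). -/
def isDeltaRooted : STm Ω Δ arΩ arΔ → Prop
  | .opΔ _ _ => True
  | _ => False

/-- The set of variables of a term. -/
def vars : STm Ω Δ arΩ arΔ → Set ℕ
  | .var x => {x}
  | .opΩ _ ts => ⋃ i, (ts i).vars
  | .opΔ _ ts => ⋃ i, (ts i).vars

/-- Number of occurrences of the variable x in a term. -/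
def varCount (x : ℕ) : STm Ω Δ arΩ arΔ → ℕ
  | .var y => if y = x then 1 else 0
  | .opΩ _ ts => ∑ i, (ts i).varCount x
  | .opΔ _ ts => ∑ i, (ts i).varCount x

/-- An equation is regular iff both sides have the same variables. -/
def Regular (p : STm Ω Δ arΩ arΔ × STm Ω Δ arΩ arΔ) : Prop :=
  p.1.vars = p.2.vars

/-- An equation is linear iff no variable is repeated in either side. -/
def Linear (p : STm Ω Δ arΩ arΔ × STm Ω Δ arΩ arΔ) : Prop :=
  (∀ x, p.1.varCount x ≤ 1) ∧ (∀ x, p.2.varCount x ≤ 1)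

end STm

/-- The congruence =_B generated by applying the equations of B = BΩ ∪ BΔ at
    arbitrary positions under arbitrary substitutions. -/
inductive BEqv {Ω Δ : Type} {arΩ : Ω → ℕ} {arΔ : Δ → ℕ}
    (B : Set (STm Ω Δ arΩ arΔ × STm Ω Δ arΩ arΔ)) :
    STm Ω Δ arΩ arΔ → STm Ω Δ arΩ arΔ → Prop
  | ax (p) (hp : p ∈ B) (σ : ℕ → STm Ω Δ arΩ arΔ) :
      BEqv B (p.1.subst σ) (p.2.subst σ)
  | refl (t) : BEqv B t t
  | symm {a b} : BEqv B a b → BEqv B b a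
  | trans {a b c} : BEqv B a b → BEqv B b c → BEqv B a c
  | congΩ (f) {ts ts'} : (∀ i, BEqv B (ts i) (ts' i)) →
      BEqv B (.opΩ f ts) (.opΩ f ts')
  | congΔ (g) {ts ts'} : (∀ i, BEqv B (ts i) (ts' i)) →
      BEqv B (.opΔ g ts) (.opΔ g ts')


theorem STm.subst_isOmega_iff {Ω Δ : Type} {arΩ : Ω → ℕ} {arΔ : Δ → ℕ}
    (σ : ℕ → STm Ω Δ arΩ arΔ) :
    ∀ t : STm Ω Δ arΩ arΔ, t.isOmega →
      ((t.subst σ).isOmega ↔ ∀ x ∈ t.vars, (σ x).isOmega) := by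
  intro t
  induction t with
  | var x => intro _; simp [STm.subst, STm.vars]
  | opΩ f ts ih =>
      intro h
      simp only [STm.subst, STm.isOmega, STm.vars, Set.mem_iUnion]
      constructor
      · rintro H x ⟨i, hx⟩
        exact ((ih i (h i)).mp (H i)) x hx
      · intro H i
        exact (ih i (h i)).mpr fun x hx => H x ⟨i, hx⟩
  | opΔ g ts ih => intro h; exact absurd h (by simp [STm.isOmega])

theorem beqv_omega_iff
    {Ω Δ : Type} {arΩ : Ω → ℕ} {arΔ : Δ → ℕ}
    (BO BD : Set (STm Ω Δ arΩ arΔ × STm Ω Δ arΩ arΔ))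
    (hBO : ∀ p ∈ BO, p.1.isOmega ∧ p.2.isOmega ∧ STm.Regular p ∧ STm.Linear p)
    (hBD : ∀ p ∈ BD, p.1.isDeltaRooted ∧ p.2.isDeltaRooted ∧
      STm.Regular p ∧ STm.Linear p)
    {u v : STm Ω Δ arΩ arΔ} (h : BEqv (BO ∪ BD) u v) :
    u.isOmega ↔ v.isOmega := by
  induction h with
  | ax p hp σ =>
      rcases hp with hp | hp
      · obtain ⟨h1, h2, hreg, _⟩ := hBO p hp
        rw [STm.subst_isOmega_iff σ _ h1, STm.subst_isOmega_iff σ _ h2, hreg]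
      · obtain ⟨h1, h2, _, _⟩ := hBD p hp
        constructor <;> intro hx
        · exfalso
          rcases p1 : p.1 with x | ⟨f, ts⟩ | ⟨g, ts⟩ <;>
            rw [p1] at h1 hx <;> simp [STm.isDeltaRooted, STm.subst, STm.isOmega] at h1 hx
        · exfalso
          rcases p2 : p.2 with x | ⟨f, ts⟩ | ⟨g, ts⟩ <;>
            rw [p2] at h2 hx <;> simp [STm.isDeltaRooted, STm.subst, STm.isOmega] at h2 hx
  | refl t => rfl
  | symm _ ih => exact ih.symm
  | trans _ _ ih1 ih2 => exact ih1.trans ih2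
  | congΩ f _ ih =>
      simp only [STm.isOmega]
      exact forall_congr' fun i => ih i
  | congΔ g _ ih => simp [STm.isOmega]

/-- If BΩ consists of regular, linear Ω-equations and BΔ of regular, linear
    equations whose both sides are non-variable Δ-rooted terms, then
    B = BΩ ∪ BΔ is conservative over Ω-terms: if u =_B v and u is an Ω-term,
    then v is an Ω-term. -/
theorem beqv_preserves_omega_terms
    {Ω Δ : Type} {arΩ : Ω → ℕ} {arΔ : Δ → ℕ}
    (BO BD : Set (STm Ω Δ arΩ arΔ × STm Ω Δ arΩ arΔ))
    (hBO : ∀ p ∈ BO, p.1.isOmega ∧ p.2.isOmega ∧ STm.Regular p ∧ STm.Linear p)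
    (hBD : ∀ p ∈ BD, p.1.isDeltaRooted ∧ p.2.isDeltaRooted ∧
      STm.Regular p ∧ STm.Linear p) :
    ∀ u v : STm Ω Δ arΩ arΔ, BEqv (BO ∪ BD) u v → u.isOmega → v.isOmega :=
  fun _ _ h => (beqv_omega_iff BO BD hBO hBD h).mp
end

section
/- Soundness of the Π-elimination step: let p be a predicate on ground constructor terms such that for all ground t, ¬p(t) holds iff t is an instance vρ of one of finitely many negative constrained patterns (v_j, C_j) with ρ satisfying the constraint C_j (a conjunction of disequalities). Then a conjunction D₁ ∧ ¬p(t) ∧ D₂ (with free variables, interpreted over ground instances) is satisfiable iff for some j, some unifier α of t with (a renaming of) v_j exists such that (D₁ ∧ C_j ∧ D₂)α is satisfiable. -/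
/-- Terms of a free term algebra over a signature (Op, ar), variables ℕ. -/
inductive FTm (Op : Type) (ar : Op → ℕ) where
  | var : ℕ → FTm Op ar
  | op : (f : Op) → (Fin (ar f) → FTm Op ar) → FTm Op ar

namespace FTm

variable {Op : Type} {ar : Op → ℕ}

def subst (σ : ℕ → FTm Op ar) : FTm Op ar → FTm Op ar
  | .var x => σ x
  | .op f ts => .op f (fun i => (ts i).subst σ)

def isGround : FTm Op ar → Prop
  | .var _ => False
  | .op _ ts => ∀ i, (ts i).isGround

def vars : FTm Op ar → Set ℕ
  | .var x => {x}
  | .op _ ts => ⋃ i, (ts i).vars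

end FTm

section PiElim

variable {Op : Type} {ar : Op → ℕ}

def GroundSub (σ : ℕ → FTm Op ar) : Prop := ∀ x, (σ x).isGround

/-- A ground substitution σ satisfies a conjunction of disequalities D. -/
def SatD (σ : ℕ → FTm Op ar) (D : List (FTm Op ar × FTm Op ar)) : Prop :=
  ∀ pr ∈ D, FTm.subst σ pr.1 ≠ FTm.subst σ pr.2

/-- Variables occurring in a list of disequalities. -/
def varsD (D : List (FTm Op ar × FTm Op ar)) : Set ℕ :=
  ⋃ pr ∈ D, pr.1.vars ∪ pr.2.vars

/-- The renaming substitution induced by a variable renaming r. -/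
def renSub (r : ℕ → ℕ) : ℕ → FTm Op ar := fun x => .var (r x)

end PiElim

section Aux

variable {Op : Type} {ar : Op → ℕ}

theorem subst_ground {σ : ℕ → FTm Op ar} (h : GroundSub σ) (u : FTm Op ar) :
    (u.subst σ).isGround := by
  induction u with
  | var x => exact h x
  | op f ts ih => exact fun i => ih i

theorem ground_subst {u : FTm Op ar} (h : u.isGround) (σ : ℕ → FTm Op ar) :
    u.subst σ = u := by
  induction u with
  | var x => exact absurd h id
  | op f ts ih => exact congrArg _ (funext fun i => ih i (h i))

theorem subst_comp (σ τ : ℕ → FTm Op ar) (u : FTm Op ar) :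
    (u.subst σ).subst τ = u.subst (fun x => (σ x).subst τ) := by
  induction u with
  | var x => rfl
  | op f ts ih => exact congrArg _ (funext ih)

theorem subst_congr {σ τ : ℕ → FTm Op ar} {u : FTm Op ar}
    (h : ∀ x ∈ u.vars, σ x = τ x) : u.subst σ = u.subst τ := by
  induction u with
  | var x => exact h x rfl
  | op f ts ih =>
    exact congrArg _ (funext fun i => ih i fun x hx => h x (Set.mem_iUnion.2 ⟨i, hx⟩))

theorem vars_finite (u : FTm Op ar) : u.vars.Finite := by
  induction u with
  | var x => exact Set.finite_singleton x
  | op f ts ih => exact Set.finite_iUnion ih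

theorem varsD_finite (D : List (FTm Op ar × FTm Op ar)) : (varsD D).Finite := by
  apply Set.Finite.biUnion D.finite_toSet
  intro pr _
  exact (vars_finite pr.1).union (vars_finite pr.2)

theorem vars_renSub (r : ℕ → ℕ) (u : FTm Op ar) :
    (u.subst (renSub r)).vars = r '' u.vars := by
  induction u with
  | var x => simp [FTm.subst, renSub, FTm.vars]
  | op f ts ih => simp [FTm.subst, FTm.vars, ih, Set.image_iUnion]

theorem varsD_ren (r : ℕ → ℕ) (D : List (FTm Op ar × FTm Op ar)) :
    varsD (D.map (fun pr => (pr.1.subst (renSub r), pr.2.subst (renSub r))))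
      = r '' varsD D := by
  ext x
  simp only [varsD, List.mem_map, Set.mem_iUnion, Set.mem_union, Set.mem_image, Prod.exists]
  constructor
  · rintro ⟨a, b, ⟨c, d, hcd, rfl, rfl⟩, h⟩
    rw [vars_renSub, vars_renSub] at h
    rcases h with ⟨y, hy, rfl⟩ | ⟨y, hy, rfl⟩
    · exact ⟨y, ⟨c, d, hcd, Or.inl hy⟩, rfl⟩
    · exact ⟨y, ⟨c, d, hcd, Or.inr hy⟩, rfl⟩
  · rintro ⟨y, ⟨a, b, hab, hy⟩, rfl⟩
    refine ⟨FTm.subst (renSub r) a, FTm.subst (renSub r) b, ⟨a, b, hab, rfl⟩, ?_⟩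
    rw [vars_renSub, vars_renSub]
    rcases hy with hy | hy
    · exact Or.inl ⟨y, hy, rfl⟩
    · exact Or.inr ⟨y, hy, rfl⟩

end Aux

/-- Soundness of the Π-elimination step. Let p be a predicate on ground terms
    whose failure is characterized by finitely many negative constrained
    patterns PS: for ground t, ¬p(t) iff t is a ground instance v ρ of some
    (v, C) ∈ PS with ρ satisfying the disequality constraint C. Then the
    conjunction D₁ ∧ p(t) ≠ tt ∧ D₂ is satisfiable (by a ground substitution)
    iff for some pattern (v, C) ∈ PS, some renaming r of its variables apart
    from those of t, D₁, D₂, and some (syntactic) unifier α of t and the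
    renamed v, the conjunction (D₁ ∧ C ∧ D₂)α is satisfiable. -/
theorem pi_elimination_sound
    {Op : Type} {ar : Op → ℕ}
    (p : FTm Op ar → Prop)
    (PS : List (FTm Op ar × List (FTm Op ar × FTm Op ar)))
    (hPS : ∀ t : FTm Op ar, t.isGround →
      (¬ p t ↔ ∃ q ∈ PS, ∃ ρ, GroundSub ρ ∧ t = q.1.subst ρ ∧
        ∀ pr ∈ q.2, FTm.subst ρ pr.1 ≠ FTm.subst ρ pr.2))
    (t : FTm Op ar) (D₁ D₂ : List (FTm Op ar × FTm Op ar)) :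
    (∃ σ, GroundSub σ ∧ SatD σ D₁ ∧ ¬ p (t.subst σ) ∧ SatD σ D₂) ↔
    (∃ q ∈ PS, ∃ r : ℕ → ℕ, Function.Injective r ∧
      Disjoint ((q.1.subst (renSub r)).vars ∪
          varsD (q.2.map (fun pr => (pr.1.subst (renSub r), pr.2.subst (renSub r)))))
        (t.vars ∪ varsD D₁ ∪ varsD D₂) ∧
      ∃ α : ℕ → FTm Op ar,
        t.subst α = (q.1.subst (renSub r)).subst α ∧
        ∃ σ, GroundSub σ ∧
          SatD σ ((D₁ ++ q.2.map (fun pr => (pr.1.subst (renSub r), pr.2.subst (renSub r)))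
              ++ D₂).map (fun pr => (pr.1.subst α, pr.2.subst α)))) := by
  constructor
  · rintro ⟨σ, hσg, hD1, hnp, hD2⟩
    have hground : (t.subst σ).isGround := subst_ground hσg t
    obtain ⟨q, hq, ρ, hρg, heq, hC⟩ := (hPS _ hground).1 hnp
    set S : Set ℕ := t.vars ∪ varsD D₁ ∪ varsD D₂ with hS
    have hSfin : S.Finite :=
      ((vars_finite t).union (varsD_finite D₁)).union (varsD_finite D₂)
    obtain ⟨N, hN⟩ := hSfin.bddAbove
    set r : ℕ → ℕ := fun x => x + (N + 1) with hr
    have hrinj : Function.Injective r := fun a b h => by simpa [hr] using h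
    set α : ℕ → FTm Op ar := fun x => if x ≤ N then σ x else ρ (x - (N + 1)) with hα
    have hαg : GroundSub α := by
      intro x
      by_cases hx : x ≤ N <;> simp [hα, hx, hσg x, hρg _]
    have hαS : ∀ x ∈ S, α x = σ x := by
      intro x hx
      have : x ≤ N := hN hx
      simp [hα, this]
    have hαr : ∀ x, α (r x) = ρ x := by
      intro x
      have : ¬ (x + (N + 1) ≤ N) := by omega
      simp [hα, hr, this]
    have hren : ∀ u : FTm Op ar, (u.subst (renSub r)).subst α = u.subst ρ := by
      intro u
      rw [subst_comp]
      exact subst_congr fun x _ => hαr x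
    refine ⟨q, hq, r, hrinj, ?_, α, ?_, α, hαg, ?_⟩
    · rw [Set.disjoint_left]
      intro x hx hxS
      have hxN : x ≤ N := hN hxS
      rcases hx with hx | hx
      · rw [vars_renSub] at hx
        obtain ⟨y, -, rfl⟩ := hx
        simp only [hr] at hxN
        omega
      · rw [varsD_ren] at hx
        obtain ⟨y, -, rfl⟩ := hx
        simp only [hr] at hxN
        omega
    · have h1 : t.subst α = t.subst σ :=
        subst_congr fun x hx => hαS x (Or.inl (Or.inl hx))
      rw [h1, heq, hren]
    · intro pr hpr
      simp only [List.mem_map] at hpr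
      obtain ⟨⟨a, b⟩, hab, rfl⟩ := hpr
      simp only
      rw [ground_subst (subst_ground hαg a), ground_subst (subst_ground hαg b)]
      simp only [List.mem_append] at hab
      rcases hab with (hab | hab) | hab
      · have ha : a.subst α = a.subst σ := subst_congr fun x hx =>
          hαS x (Or.inl (Or.inr (Set.mem_biUnion hab (Or.inl hx))))
        have hb : b.subst α = b.subst σ := subst_congr fun x hx =>
          hαS x (Or.inl (Or.inr (Set.mem_biUnion hab (Or.inr hx))))
        rw [ha, hb]; exact hD1 (a, b) hab
      · simp only [List.mem_map] at hab
        obtain ⟨⟨c, d⟩, hcd, h⟩ := hab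
        obtain ⟨rfl, rfl⟩ := Prod.mk.injEq .. ▸ h
        rw [hren c, hren d]
        exact hC (c, d) hcd
      · have ha : a.subst α = a.subst σ := subst_congr fun x hx =>
          hαS x (Or.inr (Set.mem_biUnion hab (Or.inl hx)))
        have hb : b.subst α = b.subst σ := subst_congr fun x hx =>
          hαS x (Or.inr (Set.mem_biUnion hab (Or.inr hx)))
        rw [ha, hb]; exact hD2 (a, b) hab
  · rintro ⟨q, hq, r, -, -, α, hunif, σ, hσg, hsat⟩
    set τ : ℕ → FTm Op ar := fun x => (α x).subst σ with hτ
    have hτg : GroundSub τ := fun x => subst_ground hσg _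
    have hcomp : ∀ u : FTm Op ar, u.subst τ = (u.subst α).subst σ := fun u =>
      (subst_comp α σ u).symm
    have hmem : ∀ pr ∈ D₁ ++ q.2.map (fun pr =>
          (pr.1.subst (renSub r), pr.2.subst (renSub r))) ++ D₂,
        (pr.1 : FTm Op ar).subst τ ≠ pr.2.subst τ := by
      intro pr hpr
      have := hsat (pr.1.subst α, pr.2.subst α)
        (List.mem_map.2 ⟨pr, hpr, rfl⟩)
      rw [hcomp pr.1, hcomp pr.2]
      exact this
    refine ⟨τ, hτg, ?_, ?_, ?_⟩
    · intro pr hpr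
      exact hmem pr (by simp [hpr])
    · have hg : (t.subst τ).isGround := subst_ground hτg t
      rw [hPS _ hg]
      refine ⟨q, hq, fun x => τ (r x), fun x => hτg _, ?_, ?_⟩
      · rw [hcomp t, hunif, subst_comp, subst_comp]
        rfl
      · intro pr hpr
        have := hmem (pr.1.subst (renSub r), pr.2.subst (renSub r))
          (by simp only [List.mem_append]
              exact Or.inl (Or.inr (List.mem_map.2 ⟨pr, hpr, rfl⟩)))
        simp only [subst_comp] at this
        exact this
    · intro pr hpr
      exact hmem pr (by simp [hpr])
end
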